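/- arXiv:1906.09347 — 2 statements merged into one kernel-verified Lean document; each statement's English description precedes it below -/
import Mathlib

section
/- Suppose 0 ≤ ρ < ρ̂₁. Then the infimum of g(t,s) over (t,s) ∈ (0,∞)² equals 4(μ₂+(1−2ρ)μ₁), and (t_A, s_A) = ((1−2ρ)/μ₁, 1/(μ₂−2ρμ₁)) is the unique minimizer of g on (0,∞)²; moreover this minimizer satisfies t_A > s_A. -/
open Matrix

/-- The covariance matrix of `(X₁(t), X₂(s))`. -/
noncomputable def covM (ρ t s : ℝ) : Matrix (Fin 2) (Fin 2) ℝ :=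
  !![t, ρ * min t s; ρ * min t s, s]

/-- The quadratic form `(x,y) Σ_{ts}⁻¹ (x,y)ᵀ`. -/
noncomputable def quadF (ρ t s x y : ℝ) : ℝ :=
  dotProduct ![x, y] ((covM ρ t s)⁻¹.mulVec ![x, y])

/-- `g(t,s) = inf{ (x,y) Σ_{ts}⁻¹ (x,y)ᵀ : x ≥ 1+μ₁t, y ≥ 1+μ₂s }`. -/
noncomputable def gFun (μ₁ μ₂ ρ t s : ℝ) : ℝ :=
  sInf { q : ℝ | ∃ x y : ℝ, 1 + μ₁ * t ≤ x ∧ 1 + μ₂ * s ≤ y ∧ q = quadF ρ t s x y }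

/-- `g₃(t,s)`: the quadratic form at the corner point `(1+μ₁t, 1+μ₂s)`. -/
noncomputable def g3Fun (μ₁ μ₂ ρ t s : ℝ) : ℝ :=
  quadF ρ t s (1 + μ₁ * t) (1 + μ₂ * s)

/-!
Write `ν = μ₂ - 2ρμ₁`, `c = μ₂ + (1 - 2ρ)μ₁`, `m = min t s` and `u = μ₁²t + νμ₂s`. By
Cauchy–Schwarz for the weight `w = (μ₁, ν)`, `(x,y) Σ⁻¹ (x,y)ᵀ ≥ (μ₁x + νy)² / (w Σ wᵀ)`, and on the
feasible orthant `μ₁x + νy ≥ c + u`. Since `(c + u)² = 4c·(w Σ wᵀ) + (c - u)² + 8cρμ₁ν(s - m)`,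
this gives `g ≥ 4c`. Equality needs `u = c`, `ρm = ρs` and equality in Cauchy–Schwarz at the
corner `(1 + μ₁t, 1 + μ₂s)`, which together force `(t, s) = (t_A, s_A)`; as `g` is an infimum,
the Cauchy–Schwarz step is made quantitative on the orthant. Finally `ρ < ρ̂₁` says exactly that
`ρ` lies below the smaller root of `4μ₁ρ² - 2(μ₁ + μ₂)ρ + μ₂ - μ₁`, i.e. `t_A > s_A`.
-/

lemma mul_sq_div_add_sq_le {D L R w z : ℝ} (hD : 0 < D) (hL : 0 < L) (hw : |w| ≤ L * z) :
    D * R ^ 2 / (D + L ^ 2) ≤ D * z ^ 2 + (R + w) ^ 2 := by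
  have hw2 : w ^ 2 ≤ L ^ 2 * z ^ 2 := by
    rw [← sq_abs, ← mul_pow]; exact pow_le_pow_left₀ (abs_nonneg w) hw 2
  rw [div_le_iff₀ (by positivity), ← mul_le_mul_iff_of_pos_left (pow_pos hL 2)]
  -- `L²·((D + L²)(D z² + (R + w)²) - D R²) ≥ (D w + L² (R + w))²` once `L² z² ≥ w²`
  nlinarith [sq_nonneg (D * w + L ^ 2 * (R + w)),
    mul_le_mul_of_nonneg_left hw2 (by positivity : 0 ≤ D * (D + L ^ 2))]

/-- Cauchy–Schwarz `(s x² - 2rxy + t y²)·(α, β) Σ (α, β)ᵀ ≥ det Σ · (αx + βy)²` for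
`Σ = !![t, r; r, s]`, made stable on the orthant `x ≥ a, y ≥ b`: the Cauchy–Schwarz defect at the corner `(a, b)`
survives, up to the factor `κ`, everywhere in the orthant. -/
lemma exists_quadForm_lower_bound {t s r α β a b : ℝ} (hD : 0 < t * s - r ^ 2) (hα : 0 < α)
    (hβ : 0 < β) (hC₁ : 0 < α * r + β * s) (hC₂ : 0 < α * t + β * r)
    (hab : 0 ≤ α * a + β * b) :
    ∃ κ > 0, ∀ x y, a ≤ x → b ≤ y →
      (t * s - r ^ 2) * (α * a + β * b) ^ 2
          + κ * ((α * r + β * s) * a - (α * t + β * r) * b) ^ 2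
        ≤ (s * x ^ 2 - 2 * r * x * y + t * y ^ 2) * (α ^ 2 * t + 2 * α * β * r + β ^ 2 * s) := by
  set D := t * s - r ^ 2
  set C₁ := α * r + β * s
  set C₂ := α * t + β * r
  set L := C₁ / α + C₂ / β
  have hL : 0 < L := by positivity
  refine ⟨D / (D + L ^ 2), by positivity, fun x y hx hy => ?_⟩
  set z := α * (x - a) + β * (y - b)
  set w := C₁ * (x - a) - C₂ * (y - b)
  have hz : 0 ≤ z := by
    have := mul_nonneg hα.le (sub_nonneg.2 hx); have := mul_nonneg hβ.le (sub_nonneg.2 hy)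
    linarith
  have hw : |w| ≤ L * z := by
    have hLz : L * z = C₁ * (x - a) + C₂ * (y - b)
        + (C₂ / β * α * (x - a) + C₁ / α * β * (y - b)) := by
      simp only [L, z]; field_simp; ring
    have h₁ := mul_nonneg hC₁.le (sub_nonneg.2 hx)
    have h₂ := mul_nonneg hC₂.le (sub_nonneg.2 hy)
    have h₃ : 0 ≤ C₂ / β * α * (x - a) + C₁ / α * β * (y - b) := by
      have := sub_nonneg.2 hx; have := sub_nonneg.2 hy; positivity
    rw [abs_le]; constructor <;> linarith
  have hCS : (s * x ^ 2 - 2 * r * x * y + t * y ^ 2) * (α ^ 2 * t + 2 * α * β * r + β ^ 2 * s)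
      = D * (α * a + β * b + z) ^ 2 + (C₁ * a - C₂ * b + w) ^ 2 := by ring
  have hsq : (α * a + β * b) ^ 2 + z ^ 2 ≤ (α * a + β * b + z) ^ 2 := by nlinarith
  calc D * (α * a + β * b) ^ 2 + D / (D + L ^ 2) * (C₁ * a - C₂ * b) ^ 2
      = D * (α * a + β * b) ^ 2 + D * (C₁ * a - C₂ * b) ^ 2 / (D + L ^ 2) := by ring
    _ ≤ D * (α * a + β * b) ^ 2 + (D * z ^ 2 + (C₁ * a - C₂ * b + w) ^ 2) := by
      gcongr; exact mul_sq_div_add_sq_le hD hL hw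
    _ ≤ D * (α * a + β * b + z) ^ 2 + (C₁ * a - C₂ * b + w) ^ 2 := by nlinarith
    _ = _ := hCS.symm

lemma quadF_eq (ρ t s x y : ℝ) :
    quadF ρ t s x y
      = (s * x ^ 2 - 2 * (ρ * min t s) * x * y + t * y ^ 2) / (t * s - (ρ * min t s) ^ 2) := by
  have hdet : (covM ρ t s).det = t * s - (ρ * min t s) ^ 2 := by
    simp [covM, Matrix.det_fin_two_of]; ring
  rw [quadF, Matrix.inv_def, hdet, Ring.inverse_eq_inv', covM, Matrix.adjugate_fin_two_of]
  simp [Matrix.mulVec, dotProduct, Fin.sum_univ_two]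
  field_simp
  ring

lemma covM_det_pos {ρ t s : ℝ} (hρ : |ρ| < 1) (ht : 0 < t) (hs : 0 < s) :
    0 < t * s - (ρ * min t s) ^ 2 := by
  have hm : 0 < min t s := lt_min ht hs
  have hm_sq : min t s ^ 2 ≤ t * s := by
    rw [sq]; exact mul_le_mul (min_le_left t s) (min_le_right t s) hm.le ht.le
  have hρ_sq : ρ ^ 2 < 1 := by rw [← sq_abs]; nlinarith [abs_nonneg ρ]
  nlinarith [pow_pos hm 2]

lemma le_gFun {μ₁ μ₂ ρ t s b : ℝ}
    (hb : ∀ x y, 1 + μ₁ * t ≤ x → 1 + μ₂ * s ≤ y → b ≤ quadF ρ t s x y) :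
    b ≤ gFun μ₁ μ₂ ρ t s :=
  le_csInf ⟨_, _, _, le_rfl, le_rfl, rfl⟩ fun _ ⟨x, y, hx, hy, hq⟩ => hq ▸ hb x y hx hy

lemma gFun_le_g3Fun {μ₁ μ₂ ρ t s b : ℝ}
    (hb : ∀ x y, 1 + μ₁ * t ≤ x → 1 + μ₂ * s ≤ y → b ≤ quadF ρ t s x y) :
    gFun μ₁ μ₂ ρ t s ≤ g3Fun μ₁ μ₂ ρ t s :=
  csInf_le ⟨b, fun _ ⟨x, y, hx, hy, hq⟩ => hq ▸ hb x y hx hy⟩ ⟨_, _, le_rfl, le_rfl, rfl⟩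

lemma eq_tA_sA_of_equality_case {μ₁ μ₂ ρ t s : ℝ} (hμ₁ : 0 < μ₁) (hν : 0 < μ₂ - 2 * ρ * μ₁)
    (hu : μ₁ ^ 2 * t + (μ₂ - 2 * ρ * μ₁) * μ₂ * s = μ₂ + (1 - 2 * ρ) * μ₁)
    (hR : (μ₁ * (ρ * s) + (μ₂ - 2 * ρ * μ₁) * s) * (1 + μ₁ * t)
      - (μ₁ * t + (μ₂ - 2 * ρ * μ₁) * (ρ * s)) * (1 + μ₂ * s) = 0) :
    t = (1 - 2 * ρ) / μ₁ ∧ s = 1 / (μ₂ - 2 * ρ * μ₁) := by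
  have hνs : (μ₂ - 2 * ρ * μ₁) * s = 1 := by
    have : (μ₂ + (1 - 2 * ρ) * μ₁) * ((μ₂ - 2 * ρ * μ₁) * s - 1) = 0 := by
      linear_combination μ₁ * hR - (μ₁ * (ρ * s) + (μ₂ - 2 * ρ * μ₁) * s - (1 + μ₂ * s)) * hu
    have hc : μ₂ + (1 - 2 * ρ) * μ₁ ≠ 0 := by nlinarith
    linear_combination (mul_eq_zero.1 this).resolve_left hc
  constructor
  · rw [eq_div_iff hμ₁.ne']
    exact mul_left_cancel₀ hμ₁.ne' (by linear_combination hu - μ₂ * hνs)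
  · rw [eq_div_iff hν.ne']; linear_combination hνs

lemma exists_gap_le_quadF {μ₁ μ₂ ρ t s : ℝ} (hμ₁ : 0 < μ₁) (hν : 0 < μ₂ - 2 * ρ * μ₁)
    (hρ₀ : 0 ≤ ρ) (hρ₁ : ρ < 1) (ht : 0 < t) (hs : 0 < s) :
    ∃ ε ≥ 0, (ε = 0 → t = (1 - 2 * ρ) / μ₁ ∧ s = 1 / (μ₂ - 2 * ρ * μ₁)) ∧
      ∀ x y, 1 + μ₁ * t ≤ x → 1 + μ₂ * s ≤ y →
        4 * (μ₂ + (1 - 2 * ρ) * μ₁) + ε ≤ quadF ρ t s x y := by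
  set ν := μ₂ - 2 * ρ * μ₁
  set c := μ₂ + (1 - 2 * ρ) * μ₁
  set m := min t s
  have hm : 0 < m := lt_min ht hs
  have hμ₂ : 0 < μ₂ := by nlinarith
  have hms : 0 ≤ s - m := sub_nonneg.2 (min_le_right t s)
  have hD : 0 < t * s - (ρ * m) ^ 2 := covM_det_pos (abs_lt.2 ⟨by linarith, hρ₁⟩) ht hs
  obtain ⟨κ, hκ, hCS⟩ := exists_quadForm_lower_bound (r := ρ * m) (a := 1 + μ₁ * t)
    (b := 1 + μ₂ * s) hD hμ₁ hν (by positivity) (by positivity) (by positivity)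
  set D := t * s - (ρ * m) ^ 2
  set W := μ₁ ^ 2 * t + 2 * μ₁ * ν * (ρ * m) + ν ^ 2 * s
  set u := μ₁ ^ 2 * t + ν * μ₂ * s
  set R := (μ₁ * (ρ * m) + ν * s) * (1 + μ₁ * t) - (μ₁ * t + ν * (ρ * m)) * (1 + μ₂ * s)
  set G := (c - u) ^ 2 + 8 * c * μ₁ * ν * (ρ * (s - m))
  have hc : 0 < c := by simp only [c, ν] at hν ⊢; nlinarith
  have hW : 0 < W := by positivity
  -- `(c + u)² = 4cu + (c - u)²`, and `u - W = 2ρμ₁ν(s - m)` by the choice of `ν`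
  have hsplit : (μ₁ * (1 + μ₁ * t) + ν * (1 + μ₂ * s)) ^ 2 = 4 * c * W + G := by
    simp only [W, G, u, c, ν]; ring
  refine ⟨(G + κ * R ^ 2 / D) / W, by positivity, fun h0 => ?_, fun x y hx hy => ?_⟩
  · have hG : G + κ * R ^ 2 / D = 0 := (div_eq_zero_iff.1 h0).resolve_right hW.ne'
    obtain ⟨hG0, hR⟩ := (add_eq_zero_iff_of_nonneg (by positivity) (by positivity)).1 hG
    obtain ⟨hu, hρm⟩ := (add_eq_zero_iff_of_nonneg (by positivity) (by positivity)).1 hG0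
    have hρm : ρ * m = ρ * s := by
      have := (mul_eq_zero.1 hρm).resolve_left (by positivity)
      linear_combination -this
    have hR : R = 0 := by simpa [hκ.ne', hD.ne'] using hR
    simp only [R, hρm] at hR
    exact eq_tA_sA_of_equality_case hμ₁ hν (by linear_combination -(pow_eq_zero_iff two_ne_zero).1 hu) hR
  · rw [quadF_eq, le_div_iff₀ hD]
    have hε : (4 * c + (G + κ * R ^ 2 / D) / W) * D = (D * (4 * c * W + G) + κ * R ^ 2) / W := by
      field_simp; ring
    rw [hε, div_le_iff₀ hW, ← hsplit]
    linarith [hCS x y hx hy]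

lemma pos_and_lt_half_of_lt_rhoHat {μ₁ μ₂ ρ : ℝ} (hμ₁ : 0 < μ₁) (hμ₁₂ : μ₁ ≤ μ₂)
    (hρ : ρ < (μ₁ + μ₂ - √((μ₁ + μ₂) ^ 2 - 4 * μ₁ * (μ₂ - μ₁))) / (4 * μ₁)) :
    0 < 4 * μ₁ * ρ ^ 2 - 2 * (μ₁ + μ₂) * ρ + (μ₂ - μ₁) ∧ ρ < 1 / 2 := by
  have hdisc : (μ₁ + μ₂) ^ 2 - 4 * μ₁ * (μ₂ - μ₁) = (μ₂ - μ₁) ^ 2 + (2 * μ₁) ^ 2 := by ring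
  rw [lt_div_iff₀ (by positivity), hdisc] at hρ
  set r := √((μ₂ - μ₁) ^ 2 + (2 * μ₁) ^ 2)
  have hr : r ^ 2 = (μ₂ - μ₁) ^ 2 + (2 * μ₁) ^ 2 := Real.sq_sqrt (by positivity)
  have hr₀ : μ₂ - μ₁ ≤ r := Real.le_sqrt_of_sq_le (by nlinarith)
  constructor <;> nlinarith [Real.sqrt_nonneg ((μ₂ - μ₁) ^ 2 + (2 * μ₁) ^ 2)]

lemma sA_lt_tA {μ₁ μ₂ ρ : ℝ} (hμ₁ : 0 < μ₁) (hν : 0 < μ₂ - 2 * ρ * μ₁)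
    (hp : 0 < 4 * μ₁ * ρ ^ 2 - 2 * (μ₁ + μ₂) * ρ + (μ₂ - μ₁)) :
    1 / (μ₂ - 2 * ρ * μ₁) < (1 - 2 * ρ) / μ₁ := by
  rw [div_lt_div_iff₀ hν hμ₁]
  linarith

lemma g3Fun_tA_sA {μ₁ μ₂ ρ : ℝ} (hμ₁ : 0 < μ₁) (hν : 0 < μ₂ - 2 * ρ * μ₁) (hρ₀ : 0 ≤ ρ)
    (hρ : ρ < 1 / 2) (hst : 1 / (μ₂ - 2 * ρ * μ₁) ≤ (1 - 2 * ρ) / μ₁) :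
    g3Fun μ₁ μ₂ ρ ((1 - 2 * ρ) / μ₁) (1 / (μ₂ - 2 * ρ * μ₁)) = 4 * (μ₂ + (1 - 2 * ρ) * μ₁) := by
  have htA : 0 < (1 - 2 * ρ) / μ₁ := div_pos (by linarith) hμ₁
  have hD := covM_det_pos (ρ := ρ) (abs_lt.2 ⟨by linarith, by linarith⟩) htA (one_div_pos.2 hν)
  rw [min_eq_right hst] at hD
  rw [g3Fun, quadF_eq, min_eq_right hst, div_eq_iff hD.ne']
  field_simp
  ring

theorem stmt3_general (μ₁ μ₂ ρ : ℝ) (hμ1 : 0 < μ₁) (hμ12 : μ₁ ≤ μ₂)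
    (hρ0 : 0 ≤ ρ)
    (hρ1 : ρ < (μ₁ + μ₂ - Real.sqrt ((μ₁ + μ₂) ^ 2 - 4 * μ₁ * (μ₂ - μ₁))) / (4 * μ₁)) :
    IsLeast { v : ℝ | ∃ t s : ℝ, 0 < t ∧ 0 < s ∧ v = gFun μ₁ μ₂ ρ t s }
      (4 * (μ₂ + (1 - 2 * ρ) * μ₁)) ∧
    (gFun μ₁ μ₂ ρ ((1 - 2 * ρ) / μ₁) (1 / (μ₂ - 2 * ρ * μ₁))
        = 4 * (μ₂ + (1 - 2 * ρ) * μ₁)) ∧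
    (∀ t s : ℝ, 0 < t → 0 < s →
      gFun μ₁ μ₂ ρ t s = 4 * (μ₂ + (1 - 2 * ρ) * μ₁) →
      t = (1 - 2 * ρ) / μ₁ ∧ s = 1 / (μ₂ - 2 * ρ * μ₁)) ∧
    (1 - 2 * ρ) / μ₁ > 1 / (μ₂ - 2 * ρ * μ₁) := by
  obtain ⟨hp, hρh⟩ := pos_and_lt_half_of_lt_rhoHat hμ1 hμ12 hρ1
  have hν : 0 < μ₂ - 2 * ρ * μ₁ := by nlinarith
  have hgap {t s : ℝ} (ht : 0 < t) (hs : 0 < s) :=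
    exists_gap_le_quadF hμ1 hν hρ0 (by linarith) ht hs
  have hle {t s : ℝ} (ht : 0 < t) (hs : 0 < s) :
      ∀ x y, 1 + μ₁ * t ≤ x → 1 + μ₂ * s ≤ y → 4 * (μ₂ + (1 - 2 * ρ) * μ₁) ≤ quadF ρ t s x y := by
    obtain ⟨ε, hε, -, hq⟩ := hgap ht hs
    exact fun x y hx hy => by linarith [hq x y hx hy]
  have hst := sA_lt_tA hμ1 hν hp
  have htA : 0 < (1 - 2 * ρ) / μ₁ := div_pos (by linarith) hμ1
  have hsA : 0 < 1 / (μ₂ - 2 * ρ * μ₁) := one_div_pos.2 hν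
  have hmin : gFun μ₁ μ₂ ρ ((1 - 2 * ρ) / μ₁) (1 / (μ₂ - 2 * ρ * μ₁))
      = 4 * (μ₂ + (1 - 2 * ρ) * μ₁) :=
    le_antisymm ((gFun_le_g3Fun (hle htA hsA)).trans_eq (g3Fun_tA_sA hμ1 hν hρ0 hρh hst.le))
      (le_gFun (hle htA hsA))
  refine ⟨⟨⟨_, _, htA, hsA, hmin.symm⟩, fun _ ⟨t, s, ht, hs, hv⟩ => hv ▸ le_gFun (hle ht hs)⟩,
    hmin, fun t s ht hs heq => ?_, hst⟩
  obtain ⟨ε, hε, hε0, hq⟩ := hgap ht hs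
  exact hε0 (le_antisymm (by linarith [le_gFun hq]) hε)

theorem stmt3 (μ₁ μ₂ ρ : ℝ) (hμ1 : 0 < μ₁) (hμ12 : μ₁ ≤ μ₂)
    (hρl : -1 < ρ) (hρu : ρ < 1) (hρ0 : 0 ≤ ρ)
    (hρ1 : ρ < (μ₁ + μ₂ - Real.sqrt ((μ₁ + μ₂) ^ 2 - 4 * μ₁ * (μ₂ - μ₁))) / (4 * μ₁)) :
    IsLeast { v : ℝ | ∃ t s : ℝ, 0 < t ∧ 0 < s ∧ v = gFun μ₁ μ₂ ρ t s }
      (4 * (μ₂ + (1 - 2 * ρ) * μ₁)) ∧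
    (gFun μ₁ μ₂ ρ ((1 - 2 * ρ) / μ₁) (1 / (μ₂ - 2 * ρ * μ₁))
        = 4 * (μ₂ + (1 - 2 * ρ) * μ₁)) ∧
    (∀ t s : ℝ, 0 < t → 0 < s →
      gFun μ₁ μ₂ ρ t s = 4 * (μ₂ + (1 - 2 * ρ) * μ₁) →
      t = (1 - 2 * ρ) / μ₁ ∧ s = 1 / (μ₂ - 2 * ρ * μ₁)) ∧
    (1 - 2 * ρ) / μ₁ > 1 / (μ₂ - 2 * ρ * μ₁) :=
  stmt3_general μ₁ μ₂ ρ hμ1 hμ12 hρ0 hρ1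
end

section
/- Suppose μ₁ < ρμ₂ (so μ₁ < μ₂ and μ₁/μ₂ < ρ < 1). Then g(t,s) = g₂(s) for all (t,s) ∈ D₂ and g(t,s) = g₃(t,s) for all (t,s) ∈ D₁. Moreover, g₃(f₁(s), s) = g₃(w₁(s), s) = g₂(s) for all s ≥ s₁*. -/
open Matrix

/-- `g₂(s) = (1+μ₂s)²/s`. -/
noncomputable def g2Fun (μ₂ s : ℝ) : ℝ := (1 + μ₂ * s) ^ 2 / s

/-- `f₁(s) = (ρ−1)/μ₁ + (ρμ₂/μ₁)s`. -/
noncomputable def f1Fun (μ₁ μ₂ ρ s : ℝ) : ℝ := (ρ - 1) / μ₁ + ρ * μ₂ / μ₁ * s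

/-- `w₁(s) = s/(ρ + (ρμ₂−μ₁)s)`. -/
noncomputable def w1Fun (μ₁ μ₂ ρ s : ℝ) : ℝ := s / (ρ + (ρ * μ₂ - μ₁) * s)

/-- The region `D₂ = {(t,s) ∈ (0,∞)² : w₁(s) ≤ t ≤ f₁(s)}`. -/
def D2 (μ₁ μ₂ ρ : ℝ) : Set (ℝ × ℝ) :=
  { p : ℝ × ℝ | 0 < p.1 ∧ 0 < p.2 ∧
      w1Fun μ₁ μ₂ ρ p.2 ≤ p.1 ∧ p.1 ≤ f1Fun μ₁ μ₂ ρ p.2 }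

/-- The region `D₁ = (0,∞)² \ D₂`. -/
def D1 (μ₁ μ₂ ρ : ℝ) : Set (ℝ × ℝ) :=
  { p : ℝ × ℝ | 0 < p.1 ∧ 0 < p.2 } \ D2 μ₁ μ₂ ρ

/-! The set defining `g` is the image of the quadrant `[A,∞) × [B,∞)`, with `A = 1 + μ₁t`,
`B = 1 + μ₂s`, under the form of `Σ⁻¹`, where `Σ = [[a, c], [c, b]]` with `a = t`, `b = s`,
`c = ρ min(t,s)`. Completing the square,
`(x,y) Σ⁻¹ (x,y)ᵀ = (b x - c y)² / (b det Σ) + y² / b`,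
so the constraint `x ≥ A` is inactive exactly when `b A ≤ c B`; then the infimum is `B² / b = g₂(s)`.
Otherwise both constraints bind: the gradient of the form at the corner `(A,B)` points into the
quadrant (`c A ≤ a B` holds throughout because `μ₁ ≤ μ₂` and `ρ < 1`), and by convexity the corner
is the minimiser, giving `g₃`. For `ρμ₂ > μ₁` the region `{b A ≤ c B}` is exactly `D₂`, and its
boundary curves `t = f₁(s)` and `t = w₁(s)` are where `b A = c B`, so there `g₃ = g₂`. -/

noncomputable def invQuadForm (a b c x y : ℝ) : ℝ :=
  (b * x ^ 2 - 2 * c * x * y + a * y ^ 2) / (a * b - c ^ 2)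

lemma dotProduct_inv_mulVec_fin_two (a b c x y : ℝ) (hd : a * b - c ^ 2 ≠ 0) :
    ![x, y] ⬝ᵥ (!![a, c; c, b]⁻¹ *ᵥ ![x, y]) = invQuadForm a b c x y := by
  rw [Matrix.inv_def, Matrix.adjugate_fin_two, Matrix.det_fin_two_of, Ring.inverse_eq_inv',
    invQuadForm, ← sq]
  simp only [dotProduct, mulVec, Fin.sum_univ_two, of_apply, cons_val', cons_val_zero, cons_val_one,
    cons_val_fin_one, Matrix.smul_apply, smul_eq_mul]
  field_simp
  ring

section QuadrantMin

variable {a b c : ℝ}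

lemma invQuadForm_eq_sq_div_add (hb : b ≠ 0) (hd : a * b - c ^ 2 ≠ 0) (x y : ℝ) :
    invQuadForm a b c x y = (b * x - c * y) ^ 2 / (b * (a * b - c ^ 2)) + y ^ 2 / b := by
  rw [invQuadForm, eq_comm, div_add_div _ _ (mul_ne_zero hb hd) hb,
    div_eq_div_iff (mul_ne_zero (mul_ne_zero hb hd) hb) hd]
  ring

lemma isLeast_invQuadForm_of_le (hb : 0 < b) (hd : 0 < a * b - c ^ 2) {p q : ℝ} (hq : 0 ≤ q)
    (h : b * p ≤ c * q) :
    IsLeast {v | ∃ x y, p ≤ x ∧ q ≤ y ∧ v = invQuadForm a b c x y} (q ^ 2 / b) := by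
  simp_rw [invQuadForm_eq_sq_div_add hb.ne' hd.ne']
  constructor
  · refine ⟨c * q / b, q, ?_, le_rfl, ?_⟩
    · rwa [le_div_iff₀' hb]
    · rw [mul_div_cancel₀ _ hb.ne', sub_self]
      simp
  · rintro _ ⟨x, y, -, hy, rfl⟩
    have hy2 : q ^ 2 ≤ y ^ 2 := pow_le_pow_left₀ hq hy 2
    have : 0 ≤ (b * x - c * y) ^ 2 / (b * (a * b - c ^ 2)) := by positivity
    linarith [div_le_div_of_nonneg_right hy2 hb.le]

/-- `Q(x,y) - Q(p,q) = 2 (x-p, y-q) Σ⁻¹ (p,q)ᵀ + Q(x-p, y-q)`; the coordinates of `Σ⁻¹ (p,q)ᵀ`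
are positive multiples of `b p - c q` and `a q - c p`, and the last term is nonnegative. -/
lemma isLeast_invQuadForm_corner (hb : 0 < b) (hd : 0 < a * b - c ^ 2) {p q : ℝ}
    (h₁ : c * q ≤ b * p) (h₂ : c * p ≤ a * q) :
    IsLeast {v | ∃ x y, p ≤ x ∧ q ≤ y ∧ v = invQuadForm a b c x y} (invQuadForm a b c p q) := by
  refine ⟨⟨p, q, le_rfl, le_rfl, rfl⟩, ?_⟩
  rintro _ ⟨x, y, hx, hy, rfl⟩
  rw [invQuadForm, invQuadForm, div_le_div_iff_of_pos_right hd]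
  have hpsd : 0 ≤ b * (x - p) ^ 2 - 2 * c * (x - p) * (y - q) + a * (y - q) ^ 2 := by
    nlinarith [sq_nonneg (b * (x - p) - c * (y - q)), sq_nonneg (y - q)]
  nlinarith [mul_nonneg (sub_nonneg.2 h₁) (sub_nonneg.2 hx),
    mul_nonneg (sub_nonneg.2 h₂) (sub_nonneg.2 hy)]

end QuadrantMin

lemma det_covM_pos {ρ t s : ℝ} (hρl : -1 < ρ) (hρu : ρ < 1) (ht : 0 < t) (hs : 0 < s) :
    0 < t * s - (ρ * min t s) ^ 2 := by
  have hm : 0 < min t s := lt_min ht hs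
  have hρ2 : ρ ^ 2 < 1 := by nlinarith
  nlinarith [mul_lt_mul_of_pos_right hρ2 (mul_pos hm hm),
    mul_le_mul (min_le_left t s) (min_le_right t s) hm.le ht.le]

lemma quadF_eq_invQuadForm {ρ t s : ℝ} (hd : t * s - (ρ * min t s) ^ 2 ≠ 0) (x y : ℝ) :
    quadF ρ t s x y = invQuadForm t s (ρ * min t s) x y :=
  dotProduct_inv_mulVec_fin_two _ _ _ _ _ hd

section Regions

variable {μ₁ μ₂ ρ t s : ℝ}

lemma gFun_eq_g2Fun (hρl : -1 < ρ) (hρu : ρ < 1) (ht : 0 < t) (hs : 0 < s)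
    (hB : 0 ≤ 1 + μ₂ * s) (h : s * (1 + μ₁ * t) ≤ ρ * min t s * (1 + μ₂ * s)) :
    gFun μ₁ μ₂ ρ t s = g2Fun μ₂ s := by
  have hd := det_covM_pos hρl hρu ht hs
  simp_rw [gFun, quadF_eq_invQuadForm hd.ne']
  exact (isLeast_invQuadForm_of_le hs hd hB h).csInf_eq

lemma gFun_eq_g3Fun (hρl : -1 < ρ) (hρu : ρ < 1) (ht : 0 < t) (hs : 0 < s)
    (h₁ : ρ * min t s * (1 + μ₂ * s) ≤ s * (1 + μ₁ * t))
    (h₂ : ρ * min t s * (1 + μ₁ * t) ≤ t * (1 + μ₂ * s)) :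
    gFun μ₁ μ₂ ρ t s = g3Fun μ₁ μ₂ ρ t s := by
  have hd := det_covM_pos hρl hρu ht hs
  simp_rw [gFun, g3Fun, quadF_eq_invQuadForm hd.ne']
  exact (isLeast_invQuadForm_corner hs hd h₁ h₂).csInf_eq

lemma g3Fun_eq_g2Fun (hρl : -1 < ρ) (hρu : ρ < 1) (ht : 0 < t) (hs : 0 < s)
    (h : s * (1 + μ₁ * t) = ρ * min t s * (1 + μ₂ * s)) :
    g3Fun μ₁ μ₂ ρ t s = g2Fun μ₂ s := by
  have hd := det_covM_pos hρl hρu ht hs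
  rw [g3Fun, quadF_eq_invQuadForm hd.ne', invQuadForm_eq_sq_div_add hs.ne' hd.ne', h, sub_self,
    g2Fun]
  simp

lemma rho_min_mul_le_of_mu_le (hμ₁ : 0 ≤ μ₁) (hμ₁₂ : μ₁ ≤ μ₂) (hρu : ρ < 1) (ht : 0 < t)
    (hs : 0 < s) : ρ * min t s * (1 + μ₁ * t) ≤ t * (1 + μ₂ * s) := by
  rcases le_total t s with hts | hst
  · rw [min_eq_left hts]
    have : μ₁ * t ≤ μ₂ * s := mul_le_mul hμ₁₂ hts ht.le (hμ₁.trans hμ₁₂)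
    nlinarith [mul_nonneg ht.le (mul_nonneg hμ₁ ht.le)]
  · rw [min_eq_right hst]
    have : ρ * μ₁ ≤ μ₂ := by nlinarith
    nlinarith [mul_pos ht hs]

lemma one_add_mul_f1Fun (hμ₁ : μ₁ ≠ 0) :
    1 + μ₁ * f1Fun μ₁ μ₂ ρ s = ρ * (1 + μ₂ * s) := by
  rw [f1Fun]
  field_simp
  ring

lemma le_f1Fun (hμ₁ : 0 < μ₁) (h : 1 - ρ ≤ (ρ * μ₂ - μ₁) * s) : s ≤ f1Fun μ₁ μ₂ ρ s := by
  rw [← mul_le_mul_iff_right₀ hμ₁, ← add_le_add_iff_left 1, one_add_mul_f1Fun hμ₁.ne']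
  linarith

lemma w1Fun_le (hs : 0 ≤ s) (h : 1 - ρ ≤ (ρ * μ₂ - μ₁) * s) : w1Fun μ₁ μ₂ ρ s ≤ s :=
  div_le_self hs (by linarith)

lemma mem_D2_iff (hμ₁ : 0 < μ₁) (hρ : 0 < ρ) (hρμ : μ₁ < ρ * μ₂) (ht : 0 < t) (hs : 0 < s) :
    (t, s) ∈ D2 μ₁ μ₂ ρ ↔ s * (1 + μ₁ * t) ≤ ρ * min t s * (1 + μ₂ * s) := by
  have hden : 0 < ρ + (ρ * μ₂ - μ₁) * s := by nlinarith
  have hB : 0 < ρ * (1 + μ₂ * s) := by nlinarith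
  have hw : w1Fun μ₁ μ₂ ρ s ≤ t ↔ s * (1 + μ₁ * t) ≤ ρ * t * (1 + μ₂ * s) := by
    rw [w1Fun, div_le_iff₀ hden]
    constructor <;> intro <;> linarith
  have hf : t ≤ f1Fun μ₁ μ₂ ρ s ↔ 1 + μ₁ * t ≤ ρ * (1 + μ₂ * s) := by
    rw [← one_add_mul_f1Fun hμ₁.ne', add_le_add_iff_left, mul_le_mul_iff_right₀ hμ₁]
  simp only [D2, Set.mem_ofPred_eq, ht, hs, true_and, hw, hf]
  rcases le_total t s with hts | hst
  · rw [min_eq_left hts]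
    exact ⟨And.left, fun h => ⟨h, by nlinarith⟩⟩
  · rw [min_eq_right hst]
    constructor
    · rintro ⟨-, h⟩
      nlinarith
    · intro h
      constructor <;> nlinarith

end Regions

theorem stmt9 (μ₁ μ₂ ρ : ℝ) (hμ1 : 0 < μ₁) (hμ12 : μ₁ ≤ μ₂)
    (hρl : -1 < ρ) (hρu : ρ < 1) (hρμ : μ₁ < ρ * μ₂) :
    (∀ t s : ℝ, (t, s) ∈ D2 μ₁ μ₂ ρ → gFun μ₁ μ₂ ρ t s = g2Fun μ₂ s) ∧
    (∀ t s : ℝ, (t, s) ∈ D1 μ₁ μ₂ ρ → gFun μ₁ μ₂ ρ t s = g3Fun μ₁ μ₂ ρ t s) ∧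
    (∀ s : ℝ, (1 - ρ) / (ρ * μ₂ - μ₁) ≤ s →
      g3Fun μ₁ μ₂ ρ (f1Fun μ₁ μ₂ ρ s) s = g2Fun μ₂ s ∧
      g3Fun μ₁ μ₂ ρ (w1Fun μ₁ μ₂ ρ s) s = g2Fun μ₂ s) := by
  have hρ : 0 < ρ := by nlinarith
  refine ⟨fun t s hD₂ => ?_, fun t s hD₁ => ?_, fun s hs₁ => ?_⟩
  · have ⟨ht, hs, _⟩ := hD₂
    have hB : 0 ≤ 1 + μ₂ * s := by nlinarith
    exact gFun_eq_g2Fun hρl hρu ht hs hB ((mem_D2_iff hμ1 hρ hρμ ht hs).1 hD₂)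
  · obtain ⟨⟨ht, hs⟩, hnot⟩ := hD₁
    rw [mem_D2_iff hμ1 hρ hρμ ht hs, not_le] at hnot
    exact gFun_eq_g3Fun hρl hρu ht hs hnot.le (rho_min_mul_le_of_mu_le hμ1.le hμ12 hρu ht hs)
  have hs : 0 < s := (div_pos (sub_pos.2 hρu) (sub_pos.2 hρμ)).trans_le hs₁
  rw [div_le_iff₀ (sub_pos.2 hρμ), mul_comm] at hs₁
  have hden : 0 < ρ + (ρ * μ₂ - μ₁) * s := by linarith
  have hst := le_f1Fun hμ1 hs₁
  have hts := w1Fun_le hs.le hs₁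
  constructor
  · apply g3Fun_eq_g2Fun hρl hρu (hs.trans_le hst) hs
    rw [min_eq_right hst, one_add_mul_f1Fun hμ1.ne']
    ring
  · have hw : 0 < w1Fun μ₁ μ₂ ρ s := div_pos hs hden
    apply g3Fun_eq_g2Fun hρl hρu hw hs
    have hmul : w1Fun μ₁ μ₂ ρ s * (ρ + (ρ * μ₂ - μ₁) * s) = s := div_mul_cancel₀ s hden.ne'
    rw [min_eq_left hts]
    linear_combination -hmul
end
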